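/- arXiv:2004.10908 — 4 statements merged into one kernel-verified Lean document; each statement's English description precedes it below -/
import Mathlib

section
/- Consider the scheduler state machine for a single domain with n workers, where each worker is in one of three states: active, thief, or sleeping, and transitions obey: (i) a worker becoming active when it was the last thief wakes one sleeping worker into the thief state (if any sleeping worker exists); (ii) a worker only goes to sleep if it is not the last thief or no active worker exists. Then the invariant holds: whenever at least one worker is active and at least one worker is not active, at least one worker is in the thief state. -/
/-!
Every transition ends in a configuration where, if some worker is active, some worker
is a thief or nobody sleeps: only the last thief can stop being a thief while a worker
is active, and it then either wakes a sleeper or there is none. The initial configuration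
has no active worker, so every reachable configuration with `a ≥ 1` was produced by a
transition. Since the number of workers is conserved, such a configuration with `a < n`
and no sleeper has `t = n - a ≥ 1`.
-/

/-- Transition system for the single-domain worker-management protocol on
configurations `(a, t, s)` = (#active, #thieves, #sleepers):
* `activate`: a thief becomes active (`t ≥ 2`);
* `activateLastWake`: the last thief becomes active and wakes one sleeper
  into the thief state (`t = 1`, `s ≥ 1`);
* `activateLastNoSleeper`: the last thief becomes active, no sleeper to wake;
* `deactivate`: an active worker becomes a thief;
* `sleep`: a thief goes to sleep, allowed only if it is not the last thief
  (`t ≥ 2`) or no active worker exists (`a = 0`). -/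
inductive WSStep : ℕ × ℕ × ℕ → ℕ × ℕ × ℕ → Prop
  | activate {a t s : ℕ} (h : 2 ≤ t) : WSStep (a, t, s) (a + 1, t - 1, s)
  | activateLastWake {a s : ℕ} (h : 1 ≤ s) : WSStep (a, 1, s) (a + 1, 1, s - 1)
  | activateLastNoSleeper {a : ℕ} : WSStep (a, 1, 0) (a + 1, 0, 0)
  | deactivate {a t s : ℕ} (h : 1 ≤ a) : WSStep (a, t, s) (a - 1, t + 1, s)
  | sleep {a t s : ℕ} (h1 : 1 ≤ t) (h2 : 2 ≤ t ∨ a = 0) :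
      WSStep (a, t, s) (a, t - 1, s + 1)

theorem Relation.ReflTransGen.invariant {α : Type*} {r : α → α → Prop} {P : α → Prop}
    (hstep : ∀ x y, r x y → P x → P y) {a b : α} (hab : ReflTransGen r a b) (ha : P a) :
    P b := by
  induction hab with
  | refl => exact ha
  | tail _ hbc ih => exact hstep _ _ hbc ih

namespace WSStep

def population (c : ℕ × ℕ × ℕ) : ℕ := c.1 + c.2.1 + c.2.2

def ThiefOrNoSleeper (c : ℕ × ℕ × ℕ) : Prop := 1 ≤ c.1 → 1 ≤ c.2.1 ∨ c.2.2 = 0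

variable {c d : ℕ × ℕ × ℕ}

theorem population_eq (h : WSStep c d) : population d = population c := by
  cases h <;> simp only [population] <;> omega

theorem thiefOrNoSleeper (h : WSStep c d) : ThiefOrNoSleeper d := by
  cases h with
  | activate h => exact fun _ => .inl (Nat.le_sub_of_add_le h)
  | activateLastWake => exact fun _ => .inl le_rfl
  | activateLastNoSleeper => exact fun _ => .inr rfl
  | deactivate => exact fun _ => .inl (Nat.le_add_left 1 _)
  | sleep _ hlast =>
    intro hactive
    exact .inl (Nat.le_sub_of_add_le (hlast.resolve_right (Nat.one_le_iff_ne_zero.mp hactive)))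

end WSStep

/-- Lemma 1 of the Taskflow paper: starting from the configuration in which
all `n` workers are thieves, in every reachable configuration, whenever at
least one worker is active and not all workers are active, at least one worker
is in the thief state. -/
theorem stmt_6 (n : ℕ) (a t s : ℕ)
    (hreach : Relation.ReflTransGen WSStep (0, n, 0) (a, t, s))
    (hactive : 1 ≤ a) (hnotall : a < n) :
    1 ≤ t := by
  have hpop : WSStep.population (a, t, s) = n :=
    hreach.invariant (P := (WSStep.population · = n)) (fun _ _ h hc => h.population_eq.trans hc)
      (by simp [WSStep.population])
  obtain hinit | ⟨c, -, hlast⟩ := hreach.cases_tail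
  · simp only [Prod.mk.injEq] at hinit
    omega
  rcases hlast.thiefOrNoSleeper hactive with hthief | hnoSleeper
  · exact hthief
  · simp only [WSStep.population] at hpop hnoSleeper
    omega
end

section
/- Under the invariant 'whenever an active worker exists and not all workers are active, at least one worker is a thief', and assuming every thief with a nonempty stealable task pool eventually succeeds in a steal and becomes active (waking another thief), the number of active workers increases monotonically (one by one) until either all workers are active or the number of active workers equals the number of available tasks. Hence the system never reaches a stable state in which unexecuted available tasks exist while some worker sleeps. -/
/-! Workers are conserved (`a + t + s = n`) and the number `m` of pending tasks never grows, so
along an execution `m` can drop only finitely often. A step that drops `m` is a steal, and by the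
wake-up rule a steal leaves a thief behind unless no sleeper is left either, i.e. unless all `n`
workers are active. So as long as `m ≥ 1` and `a < n`, every steal is followed by a state with a
thief, and fairness forces yet another steal: an infinite descent of `m`. -/

/-- Transition system on configurations `(a, t, s, m)` = (#active, #thieves,
#sleepers, #pending available tasks):
* `steal` variants: a thief steals a task and becomes active (requires
  `t ≥ 1`, `m ≥ 1`), decrementing `m`; the last thief wakes a sleeper into the
  thief state if one exists (wake-up rule), so `t' ≥ 1` whenever `s'` allows;
* `deactivate`: an active worker becomes a thief;
* `sleep`: a thief goes to sleep if it is not the last thief or no active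
  worker exists. -/
inductive WSStep7 : ℕ × ℕ × ℕ × ℕ → ℕ × ℕ × ℕ × ℕ → Prop
  | steal {a t s m : ℕ} (ht : 2 ≤ t) (hm : 1 ≤ m) :
      WSStep7 (a, t, s, m) (a + 1, t - 1, s, m - 1)
  | stealLastWake {a s m : ℕ} (hs : 1 ≤ s) (hm : 1 ≤ m) :
      WSStep7 (a, 1, s, m) (a + 1, 1, s - 1, m - 1)
  | stealLastNoSleeper {a m : ℕ} (hm : 1 ≤ m) :
      WSStep7 (a, 1, 0, m) (a + 1, 0, 0, m - 1)
  | deactivate {a t s m : ℕ} (h : 1 ≤ a) :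
      WSStep7 (a, t, s, m) (a - 1, t + 1, s, m)
  | sleep {a t s m : ℕ} (h1 : 1 ≤ t) (h2 : 2 ≤ t ∨ a = 0) :
      WSStep7 (a, t, s, m) (a, t - 1, s + 1, m)

lemma no_infinite_descent {ι : Type*} (f : ι → ℕ) (P : ι → Prop)
    (h : ∀ i, P i → ∃ j, P j ∧ f j < f i) (i : ι) : ¬ P i :=
  (InvImage.wf f wellFounded_lt).induction (C := fun i => ¬ P i) i fun i ih hi => by
    obtain ⟨j, hj, hlt⟩ := h i hi
    exact ih j hlt hj

namespace WSStep7

variable {x y : ℕ × ℕ × ℕ × ℕ}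

lemma workers_eq (h : WSStep7 x y) :
    y.1 + y.2.1 + y.2.2.1 = x.1 + x.2.1 + x.2.2.1 := by
  cases h <;> simp only <;> omega

lemma pending_le (h : WSStep7 x y) : y.2.2.2 ≤ x.2.2.2 := by
  cases h <;> simp only <;> omega

lemma sleepers_eq_zero_of_pending_lt (h : WSStep7 x y) (hlt : y.2.2.2 < x.2.2.2)
    (ht : y.2.1 = 0) : y.2.2.1 = 0 := by
  cases h <;> simp_all
  omega

end WSStep7

section Execution

variable {seq : ℕ → ℕ × ℕ × ℕ × ℕ}
  (hstep : ∀ i, WSStep7 (seq i) (seq (i + 1)) ∨ seq (i + 1) = seq i)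
include hstep

lemma workers_eq_of_execution (i : ℕ) :
    (seq i).1 + (seq i).2.1 + (seq i).2.2.1 = (seq 0).1 + (seq 0).2.1 + (seq 0).2.2.1 := by
  induction i with
  | zero => rfl
  | succ i ih =>
    rcases hstep i with hs | hs
    · rw [hs.workers_eq, ih]
    · rw [hs, ih]

lemma pending_antitone_of_execution : Antitone fun i => (seq i).2.2.2 := by
  refine antitone_nat_of_succ_le fun i => ?_
  rcases hstep i with hs | hs
  · exact hs.pending_le
  · rw [hs]

lemma step_of_pending_lt {j : ℕ} (hlt : (seq (j + 1)).2.2.2 < (seq j).2.2.2) :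
    WSStep7 (seq j) (seq (j + 1)) :=
  (hstep j).resolve_right fun hs => by rw [hs] at hlt; exact lt_irrefl _ hlt

end Execution

/-- Theorem 2 of the Taskflow paper (no under-subscription): starting with all
`n` workers as thieves and `m₀` available tasks, along every maximal execution
(each step is a transition or a stutter) that is fair — whenever tasks are
pending and a thief exists, a steal (which decrements `m`) eventually fires —
the system reaches a state where all workers are active or no pending tasks
remain; it never remains forever with unexecuted available tasks while some
worker sleeps. -/
theorem stmt_7 (n m₀ : ℕ) (seq : ℕ → ℕ × ℕ × ℕ × ℕ)
    (h0 : seq 0 = (0, n, 0, m₀))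
    (hstep : ∀ i, WSStep7 (seq i) (seq (i + 1)) ∨ seq (i + 1) = seq i)
    (hfair : ∀ i, 1 ≤ (seq i).2.2.2 → 1 ≤ (seq i).2.1 →
      ∃ j, i ≤ j ∧ (seq (j + 1)).2.2.2 < (seq j).2.2.2) :
    ∃ k, (seq k).1 = n ∨ (seq k).2.2.2 = 0 := by
  by_contra! h
  have hworkers (k : ℕ) : (seq k).1 + (seq k).2.1 + (seq k).2.2.1 = n := by
    simpa [h0] using workers_eq_of_execution hstep k
  refine no_infinite_descent (fun i => (seq i).2.2.2) (fun i => 1 ≤ (seq i).2.1) ?_ 0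
    (by simpa [h0, Nat.one_le_iff_ne_zero, eq_comm] using (h 0).1)
  intro i hthief
  obtain ⟨j, hij, hlt⟩ := hfair i (Nat.one_le_iff_ne_zero.2 (h i).2) hthief
  refine ⟨j + 1, ?_, hlt.trans_le (pending_antitone_of_execution hstep hij)⟩
  by_contra! hno_thief
  have hno_sleeper := (step_of_pending_lt hstep hlt).sleepers_eq_zero_of_pending_lt hlt
    (by omega)
  exact (h (j + 1)).1 (by linarith [hworkers (j + 1)])
end

section
/- In a two-phase-commit wait protocol, if a waiter executes prepare_wait, then re-checks a predicate P, and commits to wait only if P is still false, while every notifier first sets P to true and then issues a notification, then it is impossible for the waiter to block forever while P is true: either the waiter observes P true during the re-check and cancels, or the notification (issued after prepare_wait) wakes the committed waiter. -/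
theorem Monotone.lt_of_apply_of_not_apply {α : Type*} [LinearOrder α] {P : α → Prop}
    (hP : Monotone P) {a b : α} (ha : P a) (hb : ¬ P b) : b < a :=
  lt_of_not_ge fun hab => hb (hP hab ha)

/-- Two-phase-commit wait protocol: events are indexed by global time points.
The waiter executes `prepare_wait` at time `tprep`, re-checks the monotone
predicate `P` at time `tcheck > tprep`, and commits to wait iff `P` is still
false at the re-check.  The notifier sets `P` to true at time `tset` and then
issues its notification at time `tnotify > tset`.  The 2PC guarantee is that
any notification issued after the waiter's `prepare_wait` wakes a committed
waiter.  Then the waiter cannot block forever: either it observes `P` true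
during the re-check and cancels (does not commit), or it is woken. -/
theorem stmt_12 (P : ℕ → Prop)
    (hmono : ∀ i j, i ≤ j → P i → P j)
    (tprep tcheck tset tnotify : ℕ)
    (commits woken : Prop)
    (horder : tprep < tcheck)
    (hnotifier : tset < tnotify)
    (hset : P tset)
    (hcommit : commits ↔ ¬ P tcheck)
    (h2pc : commits → tprep < tnotify → woken) :
    ¬ commits ∨ woken := by
  by_cases hc : commits
  · have hcheck_set : tcheck < tset :=
      Monotone.lt_of_apply_of_not_apply (fun i j hij => hmono i j hij) hset (hcommit.1 hc)
    exact Or.inr (h2pc hc (horder.trans (hcheck_set.trans hnotifier)))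
  · exact Or.inl hc
end

section
/- Consider a system of n workers where each worker's state is active (A), stealing (T), or sleeping (S), with the following notification rule: a worker transitioning to A from T, when it was the last worker in T, sends a wake-up; and an external task submission when actives = 0 and thieves = 0 sends a wake-up. Suppose wake-ups are never lost for workers between prepare_wait and commit_wait (2PC guarantee). Then in every reachable configuration with at least one pending task, it is not the case that all n workers are permanently in S. -/
/-! No induction over the run is needed: every transition already ends in a configuration where a
pending task implies an awake worker. A submission either finds a worker active or stealing, or
wakes a sleeper into a thief; every steal creates an active worker; deactivation creates a thief;
and the sleep guard only fires when `m = 0`. The initial configuration has `m = 0`. -/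

/-- Transition system for task-submission correctness (Theorem 1 of the
Taskflow paper), on configurations `(a, t, s, m)` = (#active, #thieves,
#sleepers, #pending tasks):
* `submitNoWake`: an external submission increments `m` (no wake-up needed
  when some worker is active or stealing);
* `submitWake`: a submission when `a = t = 0` wakes one sleeper into the
  thief state (2PC guarantee: the wake-up is not lost);
* `steal` variants: a thief takes a pending task and becomes active; the last
  thief wakes a sleeper if one exists;
* `deactivate`: an active worker becomes a thief;
* `sleep`: a thief may go to sleep only after the re-check guard observes no
  pending task (`m = 0`); if `m ≥ 1` it cancels and stays a thief. -/
inductive WSStep13 : ℕ × ℕ × ℕ × ℕ → ℕ × ℕ × ℕ × ℕ → Prop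
  | submitNoWake {a t s m : ℕ} (h : 1 ≤ a ∨ 1 ≤ t) :
      WSStep13 (a, t, s, m) (a, t, s, m + 1)
  | submitWake {s m : ℕ} (hs : 1 ≤ s) :
      WSStep13 (0, 0, s, m) (0, 1, s - 1, m + 1)
  | steal {a t s m : ℕ} (ht : 2 ≤ t) (hm : 1 ≤ m) :
      WSStep13 (a, t, s, m) (a + 1, t - 1, s, m - 1)
  | stealLastWake {a s m : ℕ} (hs : 1 ≤ s) (hm : 1 ≤ m) :
      WSStep13 (a, 1, s, m) (a + 1, 1, s - 1, m - 1)
  | stealLastNoSleeper {a m : ℕ} (hm : 1 ≤ m) :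
      WSStep13 (a, 1, 0, m) (a + 1, 0, 0, m - 1)
  | deactivate {a t s m : ℕ} (h : 1 ≤ a) :
      WSStep13 (a, t, s, m) (a - 1, t + 1, s, m)
  | sleep {a t s m : ℕ} (ht : 1 ≤ t) (hm : m = 0) :
      WSStep13 (a, t, s, m) (a, t - 1, s + 1, m)

def PendingHasAwakeWorker : ℕ × ℕ × ℕ × ℕ → Prop
  | (a, t, _, m) => 1 ≤ m → 1 ≤ a ∨ 1 ≤ t

theorem WSStep13.pendingHasAwakeWorker {c d : ℕ × ℕ × ℕ × ℕ} (h : WSStep13 c d) :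
    PendingHasAwakeWorker d := by
  intro hm
  cases h with
  | submitNoWake h => exact h
  | submitWake => exact Or.inr le_rfl
  | steal | stealLastWake | stealLastNoSleeper => exact Or.inl (Nat.le_add_left 1 _)
  | deactivate => exact Or.inr (Nat.le_add_left 1 _)
  | sleep _ hm0 => exact absurd hm (by simp [hm0])

/-- Starting from all `n` workers as thieves with no pending task, no
reachable configuration has a pending task while all workers sleep: whenever
`m ≥ 1`, some worker is active or stealing (so it is never the case that all
`n` workers are permanently sleeping with a pending task). -/
theorem stmt_13 (n : ℕ) (a t s m : ℕ)
    (hreach : Relation.ReflTransGen WSStep13 (0, n, 0, 0) (a, t, s, m))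
    (hm : 1 ≤ m) :
    1 ≤ a ∨ 1 ≤ t := by
  rcases Relation.ReflTransGen.cases_tail hreach with hinit | ⟨_, _, hstep⟩
  · simp only [Prod.mk.injEq] at hinit
    omega
  · exact hstep.pendingHasAwakeWorker hm
end
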